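/- arXiv:1205.6123 — 2 statements merged into one kernel-verified Lean document; each statement's English description precedes it below -/
import Mathlib

section
/- The union of two interval-valued fuzzy graphs is an interval-valued fuzzy graph. That is, if G1=(A1,B1) and G2=(A2,B2) are interval-valued fuzzy graphs of G1*=(V1,E1) and G2*=(V2,E2), then (A1∪A2, B1∪B2) is an interval-valued fuzzy graph of G1*∪G2*=(V1∪V2, E1∪E2). -/
open scoped Classical

/-- `(A,B)` is an interval-valued fuzzy graph of the crisp graph `G` with vertex set `Vs`. -/
def IsIVFG {V : Type*} (Vs : Set V) (G : SimpleGraph V) (am ap : V → ℝ)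
    (bm bp : V → V → ℝ) : Prop :=
  (∀ x ∈ Vs, 0 ≤ am x ∧ am x ≤ ap x ∧ ap x ≤ 1) ∧
  (∀ x y, G.Adj x y →
    0 ≤ bm x y ∧ bm x y ≤ bp x y ∧
    bm x y ≤ min (am x) (am y) ∧ bp x y ≤ min (ap x) (ap y))

section FuzzyUnion

variable {α : Type*} [LinearOrder α] {P Q : Prop} [Decidable P] [Decidable Q] {a b c a' b' : α}

/-- The membership degree of an element in a fuzzy union: `P` and `Q` say whether the element
lies in the first and in the second support, `a` and `b` are its degrees there. -/
def fuzzyUnion (P Q : Prop) [Decidable P] [Decidable Q] (a b : α) : α :=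
  if P then (if Q then max a b else a) else b

theorem le_fuzzyUnion_left (hP : P) : a ≤ fuzzyUnion P Q a b := by
  unfold fuzzyUnion
  split_ifs <;> simp

theorem le_fuzzyUnion_right (hQ : Q) : b ≤ fuzzyUnion P Q a b := by
  unfold fuzzyUnion
  split_ifs <;> simp

theorem fuzzyUnion_le (hPQ : P ∨ Q) (ha : P → a ≤ c) (hb : Q → b ≤ c) :
    fuzzyUnion P Q a b ≤ c := by
  unfold fuzzyUnion
  split_ifs with hP hQ
  · exact max_le (ha hP) (hb hQ)
  · exact ha hP
  · exact hb (hPQ.resolve_left hP)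

theorem le_fuzzyUnion (hPQ : P ∨ Q) (ha : P → c ≤ a) (hb : Q → c ≤ b) :
    c ≤ fuzzyUnion P Q a b := by
  rcases hPQ with hP | hQ
  · exact (ha hP).trans (le_fuzzyUnion_left hP)
  · exact (hb hQ).trans (le_fuzzyUnion_right hQ)

theorem fuzzyUnion_mono (hPQ : P ∨ Q) (ha : P → a ≤ a') (hb : Q → b ≤ b') :
    fuzzyUnion P Q a b ≤ fuzzyUnion P Q a' b' :=
  fuzzyUnion_le hPQ (fun hP => (ha hP).trans (le_fuzzyUnion_left hP))
    (fun hQ => (hb hQ).trans (le_fuzzyUnion_right hQ))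

variable {Px Qx Py Qy : Prop} [Decidable Px] [Decidable Qx] [Decidable Py] [Decidable Qy]
  {ax bx ay by' : α}

theorem fuzzyUnion_le_min (hPQ : P ∨ Q) (ha : P → Px ∧ Py ∧ a ≤ min ax ay)
    (hb : Q → Qx ∧ Qy ∧ b ≤ min bx by') :
    fuzzyUnion P Q a b ≤ min (fuzzyUnion Px Qx ax bx) (fuzzyUnion Py Qy ay by') := by
  refine fuzzyUnion_le hPQ (fun hP => ?_) (fun hQ => ?_)
  · obtain ⟨hx, hy, hle⟩ := ha hP
    exact hle.trans (min_le_min (le_fuzzyUnion_left hx) (le_fuzzyUnion_left hy))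
  · obtain ⟨hx, hy, hle⟩ := hb hQ
    exact hle.trans (min_le_min (le_fuzzyUnion_right hx) (le_fuzzyUnion_right hy))

end FuzzyUnion

/-- The union of two interval-valued fuzzy graphs is an interval-valued fuzzy graph
of the union of the crisp graphs. -/
theorem ivfg_union {V : Type*} (V1 V2 : Set V) (G1 G2 : SimpleGraph V)
    (am1 ap1 am2 ap2 : V → ℝ) (bm1 bp1 bm2 bp2 : V → V → ℝ)
    (hV1 : ∀ x y, G1.Adj x y → x ∈ V1 ∧ y ∈ V1)
    (hV2 : ∀ x y, G2.Adj x y → x ∈ V2 ∧ y ∈ V2)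
    (h1 : IsIVFG V1 G1 am1 ap1 bm1 bp1) (h2 : IsIVFG V2 G2 am2 ap2 bm2 bp2) :
    IsIVFG (V1 ∪ V2) (G1 ⊔ G2)
      (fun x => if x ∈ V1 then (if x ∈ V2 then max (am1 x) (am2 x) else am1 x) else am2 x)
      (fun x => if x ∈ V1 then (if x ∈ V2 then max (ap1 x) (ap2 x) else ap1 x) else ap2 x)
      (fun x y => if G1.Adj x y then
          (if G2.Adj x y then max (bm1 x y) (bm2 x y) else bm1 x y) else bm2 x y)
      (fun x y => if G1.Adj x y then
          (if G2.Adj x y then max (bp1 x y) (bp2 x y) else bp1 x y) else bp2 x y) := by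
  obtain ⟨hv1, he1⟩ := h1
  obtain ⟨hv2, he2⟩ := h2
  refine ⟨fun x hx => ?_, fun x y hxy => ?_⟩
  · exact ⟨le_fuzzyUnion hx (hv1 x · |>.1) (hv2 x · |>.1),
      fuzzyUnion_mono hx (hv1 x · |>.2.1) (hv2 x · |>.2.1),
      fuzzyUnion_le hx (hv1 x · |>.2.2) (hv2 x · |>.2.2)⟩
  · rw [SimpleGraph.sup_adj] at hxy
    exact ⟨le_fuzzyUnion hxy (he1 x y · |>.1) (he2 x y · |>.1),
      fuzzyUnion_mono hxy (he1 x y · |>.2.1) (he2 x y · |>.2.1),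
      fuzzyUnion_le_min hxy (fun h => ⟨(hV1 x y h).1, (hV1 x y h).2, (he1 x y h).2.2.1⟩)
        (fun h => ⟨(hV2 x y h).1, (hV2 x y h).2, (he2 x y h).2.2.1⟩),
      fuzzyUnion_le_min hxy (fun h => ⟨(hV1 x y h).1, (hV1 x y h).2, (he1 x y h).2.2.2⟩)
        (fun h => ⟨(hV2 x y h).1, (hV2 x y h).2, (he2 x y h).2.2.2⟩)⟩
end

section
/- Let G1*=(V1,E1) and G2*=(V2,E2) be crisp graphs with V1∩V2=∅, and let A1, A2, B1, B2 be interval-valued fuzzy subsets of V1, V2, E1, E2 respectively. Then (A1+A2, B1+B2) is an interval-valued fuzzy graph of the join G1*+G2* if and only if (A1,B1) and (A2,B2) are interval-valued fuzzy graphs of G1* and G2* respectively. -/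
open scoped Classical

/-- The join `G1* + G2*` of crisp graphs with vertex sets `V1, V2`:
edges of `G1*`, edges of `G2*`, and all edges between `V1` and `V2`. -/
def joinGraph {V : Type*} (V1 V2 : Set V) (G1 G2 : SimpleGraph V) : SimpleGraph V :=
  SimpleGraph.fromRel (fun x y => G1.Adj x y ∨ G2.Adj x y ∨ (x ∈ V1 ∧ y ∈ V2))

/-!
On `V1` and on the edges of `G1` the join memberships are those of `(A1, B1)`, and likewise
for `V2`, `G2` because `V1 ∩ V2 = ∅`; so restricting a fuzzy graph of the join gives the two
factors. Conversely, a cross edge `xy` receives `min` of the memberships of its endpoints,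
which meets the fuzzy graph conditions as soon as `x` and `y` do.
-/

open Set

section IsIVFG

variable {V : Type*} {Vs : Set V} {G : SimpleGraph V} {am ap : V → ℝ} {bm bp : V → V → ℝ}

theorem IsIVFG.mono {Ws : Set V} {H : SimpleGraph V} (h : IsIVFG Vs G am ap bm bp)
    (hWs : Ws ⊆ Vs) (hH : H ≤ G) : IsIVFG Ws H am ap bm bp :=
  ⟨fun x hx => h.1 x (hWs hx), fun x y hxy => h.2 x y (hH hxy)⟩

theorem isIVFG_congr {am' ap' : V → ℝ} {bm' bp' : V → V → ℝ}
    (hG : ∀ x y, G.Adj x y → x ∈ Vs ∧ y ∈ Vs) (ham : EqOn am am' Vs) (hap : EqOn ap ap' Vs)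
    (hbm : ∀ x y, G.Adj x y → bm x y = bm' x y) (hbp : ∀ x y, G.Adj x y → bp x y = bp' x y) :
    IsIVFG Vs G am ap bm bp ↔ IsIVFG Vs G am' ap' bm' bp' := by
  refine and_congr (forall₂_congr fun x hx => by rw [ham hx, hap hx]) ?_
  refine forall₂_congr fun x y => imp_congr_right fun hxy => ?_
  obtain ⟨hx, hy⟩ := hG x y hxy
  rw [ham hx, ham hy, hap hx, hap hy, hbm x y hxy, hbp x y hxy]

end IsIVFG

section Join

variable {V : Type*} {V1 V2 : Set V} {G1 G2 : SimpleGraph V}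

theorem joinGraph_adj (hdisj : Disjoint V1 V2) {x y : V} :
    (joinGraph V1 V2 G1 G2).Adj x y ↔
      G1.Adj x y ∨ G2.Adj x y ∨ x ∈ V1 ∧ y ∈ V2 ∨ y ∈ V1 ∧ x ∈ V2 := by
  simp only [joinGraph, SimpleGraph.fromRel_adj]
  constructor
  · rintro ⟨-, (h | h | h) | (h | h | h)⟩
    exacts [Or.inl h, Or.inr (Or.inl h), Or.inr (Or.inr (Or.inl h)), Or.inl h.symm,
      Or.inr (Or.inl h.symm), Or.inr (Or.inr (Or.inr h))]
  · rintro (h | h | h | h)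
    · exact ⟨h.ne, Or.inl (Or.inl h)⟩
    · exact ⟨h.ne, Or.inl (Or.inr (Or.inl h))⟩
    · exact ⟨hdisj.ne_of_mem h.1 h.2, Or.inl (Or.inr (Or.inr h))⟩
    · exact ⟨(hdisj.ne_of_mem h.1 h.2).symm, Or.inr (Or.inr (Or.inr h))⟩

theorem le_joinGraph_left : G1 ≤ joinGraph V1 V2 G1 G2 :=
  fun _ _ h => (SimpleGraph.fromRel_adj _ _ _).mpr ⟨h.ne, Or.inl (Or.inl h)⟩

theorem le_joinGraph_right : G2 ≤ joinGraph V1 V2 G1 G2 :=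
  fun _ _ h => (SimpleGraph.fromRel_adj _ _ _).mpr ⟨h.ne, Or.inl (Or.inr (Or.inl h))⟩

-- `A1 + A2` and `B1 + B2` of the paper, as they appear unfolded in `ivfg_join_iff`.
variable (V1 G1 G2) in
noncomputable def joinMem (f1 f2 : V → ℝ) (x : V) : ℝ :=
  if x ∈ V1 then f1 x else f2 x

variable (V1 G1 G2) in
noncomputable def joinEdgeMem (g1 g2 : V → V → ℝ) (f1 f2 : V → ℝ) (x y : V) : ℝ :=
  if G1.Adj x y then g1 x y
  else if G2.Adj x y then g2 x y
  else if x ∈ V1 then min (f1 x) (f2 y) else min (f1 y) (f2 x)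

variable {f1 f2 : V → ℝ} {g1 g2 : V → V → ℝ}

theorem eqOn_joinMem_left : EqOn (joinMem V1 f1 f2) f1 V1 :=
  fun _ hx => if_pos hx

theorem eqOn_joinMem_right (hdisj : Disjoint V1 V2) : EqOn (joinMem V1 f1 f2) f2 V2 :=
  fun _ hx => if_neg (disjoint_right.mp hdisj hx)

theorem joinEdgeMem_of_adj_left {x y : V} (h : G1.Adj x y) :
    joinEdgeMem V1 G1 G2 g1 g2 f1 f2 x y = g1 x y :=
  if_pos h

theorem joinEdgeMem_of_adj_right (hdisj : Disjoint V1 V2)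
    (hV1 : ∀ x y, G1.Adj x y → x ∈ V1 ∧ y ∈ V1) (hV2 : ∀ x y, G2.Adj x y → x ∈ V2 ∧ y ∈ V2)
    {x y : V} (h : G2.Adj x y) :
    joinEdgeMem V1 G1 G2 g1 g2 f1 f2 x y = g2 x y := by
  have h1 : ¬G1.Adj x y := fun h1 => disjoint_left.mp hdisj (hV1 x y h1).1 (hV2 x y h).1
  rw [joinEdgeMem, if_neg h1, if_pos h]

theorem joinEdgeMem_of_cross (hdisj : Disjoint V1 V2)
    (hV1 : ∀ x y, G1.Adj x y → x ∈ V1 ∧ y ∈ V1) (hV2 : ∀ x y, G2.Adj x y → x ∈ V2 ∧ y ∈ V2)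
    {x y : V} (hxy : x ∈ V1 ∧ y ∈ V2 ∨ y ∈ V1 ∧ x ∈ V2) :
    joinEdgeMem V1 G1 G2 g1 g2 f1 f2 x y = min (joinMem V1 f1 f2 x) (joinMem V1 f1 f2 y) := by
  have h1 : ¬G1.Adj x y := fun h => by
    rcases hxy with ⟨-, hy⟩ | ⟨-, hx⟩
    exacts [disjoint_left.mp hdisj (hV1 x y h).2 hy, disjoint_left.mp hdisj (hV1 x y h).1 hx]
  have h2 : ¬G2.Adj x y := fun h => by
    rcases hxy with ⟨hx, -⟩ | ⟨hy, -⟩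
    exacts [disjoint_left.mp hdisj hx (hV2 x y h).1, disjoint_left.mp hdisj hy (hV2 x y h).2]
  rcases hxy with ⟨hx, hy⟩ | ⟨hy, hx⟩
  · simp [joinEdgeMem, joinMem, h1, h2, hx, disjoint_right.mp hdisj hy]
  · simp [joinEdgeMem, joinMem, h1, h2, hy, disjoint_right.mp hdisj hx, min_comm]

variable {am1 ap1 am2 ap2 : V → ℝ} {bm1 bp1 bm2 bp2 : V → V → ℝ}

theorem isIVFG_joinMem_left_iff (hV1 : ∀ x y, G1.Adj x y → x ∈ V1 ∧ y ∈ V1) :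
    IsIVFG V1 G1 (joinMem V1 am1 am2) (joinMem V1 ap1 ap2)
      (joinEdgeMem V1 G1 G2 bm1 bm2 am1 am2) (joinEdgeMem V1 G1 G2 bp1 bp2 ap1 ap2) ↔
      IsIVFG V1 G1 am1 ap1 bm1 bp1 :=
  isIVFG_congr hV1 eqOn_joinMem_left eqOn_joinMem_left (fun _ _ => joinEdgeMem_of_adj_left)
    (fun _ _ => joinEdgeMem_of_adj_left)

theorem isIVFG_joinMem_right_iff (hdisj : Disjoint V1 V2)
    (hV1 : ∀ x y, G1.Adj x y → x ∈ V1 ∧ y ∈ V1) (hV2 : ∀ x y, G2.Adj x y → x ∈ V2 ∧ y ∈ V2) :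
    IsIVFG V2 G2 (joinMem V1 am1 am2) (joinMem V1 ap1 ap2)
      (joinEdgeMem V1 G1 G2 bm1 bm2 am1 am2) (joinEdgeMem V1 G1 G2 bp1 bp2 ap1 ap2) ↔
      IsIVFG V2 G2 am2 ap2 bm2 bp2 :=
  isIVFG_congr hV2 (eqOn_joinMem_right hdisj) (eqOn_joinMem_right hdisj)
    (fun _ _ => joinEdgeMem_of_adj_right hdisj hV1 hV2)
    (fun _ _ => joinEdgeMem_of_adj_right hdisj hV1 hV2)

theorem IsIVFG.join (hdisj : Disjoint V1 V2)
    (hV1 : ∀ x y, G1.Adj x y → x ∈ V1 ∧ y ∈ V1) (hV2 : ∀ x y, G2.Adj x y → x ∈ V2 ∧ y ∈ V2)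
    (h1 : IsIVFG V1 G1 am1 ap1 bm1 bp1) (h2 : IsIVFG V2 G2 am2 ap2 bm2 bp2) :
    IsIVFG (V1 ∪ V2) (joinGraph V1 V2 G1 G2) (joinMem V1 am1 am2) (joinMem V1 ap1 ap2)
      (joinEdgeMem V1 G1 G2 bm1 bm2 am1 am2) (joinEdgeMem V1 G1 G2 bp1 bp2 ap1 ap2) := by
  replace h1 := (isIVFG_joinMem_left_iff (G2 := G2) (am2 := am2) (ap2 := ap2) (bm2 := bm2)
    (bp2 := bp2) hV1).mpr h1
  replace h2 := (isIVFG_joinMem_right_iff (am1 := am1) (ap1 := ap1) (bm1 := bm1) (bp1 := bp1)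
    hdisj hV1 hV2).mpr h2
  have hvert : ∀ x ∈ V1 ∪ V2, _ := fun x hx => hx.elim (h1.1 x) (h2.1 x)
  refine ⟨hvert, fun x y hxy => ?_⟩
  rcases (joinGraph_adj hdisj).mp hxy with h | h | hcross
  · exact h1.2 x y h
  · exact h2.2 x y h
  · rw [joinEdgeMem_of_cross hdisj hV1 hV2 hcross, joinEdgeMem_of_cross hdisj hV1 hV2 hcross]
    obtain ⟨hx, hy⟩ : x ∈ V1 ∪ V2 ∧ y ∈ V1 ∪ V2 := by
      rcases hcross with ⟨hx, hy⟩ | ⟨hy, hx⟩ <;> simp [hx, hy]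
    obtain ⟨hx0, hx1, -⟩ := hvert x hx
    obtain ⟨hy0, hy1, -⟩ := hvert y hy
    exact ⟨le_min hx0 hy0, min_le_min hx1 hy1, le_rfl, le_rfl⟩

end Join

/-- For crisp graphs with disjoint vertex sets, the join of the interval-valued fuzzy
subsets is an interval-valued fuzzy graph of the join `G1* + G2*` iff both factors are
interval-valued fuzzy graphs. -/
theorem ivfg_join_iff {V : Type*} (V1 V2 : Set V) (G1 G2 : SimpleGraph V)
    (am1 ap1 am2 ap2 : V → ℝ) (bm1 bp1 bm2 bp2 : V → V → ℝ)
    (hdisj : Disjoint V1 V2)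
    (hV1 : ∀ x y, G1.Adj x y → x ∈ V1 ∧ y ∈ V1)
    (hV2 : ∀ x y, G2.Adj x y → x ∈ V2 ∧ y ∈ V2) :
    IsIVFG (V1 ∪ V2) (joinGraph V1 V2 G1 G2)
      (fun x => if x ∈ V1 then am1 x else am2 x)
      (fun x => if x ∈ V1 then ap1 x else ap2 x)
      (fun x y => if G1.Adj x y then bm1 x y
        else if G2.Adj x y then bm2 x y
        else if x ∈ V1 then min (am1 x) (am2 y) else min (am1 y) (am2 x))
      (fun x y => if G1.Adj x y then bp1 x y
        else if G2.Adj x y then bp2 x y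
        else if x ∈ V1 then min (ap1 x) (ap2 y) else min (ap1 y) (ap2 x))
    ↔ IsIVFG V1 G1 am1 ap1 bm1 bp1 ∧ IsIVFG V2 G2 am2 ap2 bm2 bp2 := by
  show IsIVFG _ _ (joinMem V1 am1 am2) (joinMem V1 ap1 ap2)
    (joinEdgeMem V1 G1 G2 bm1 bm2 am1 am2) (joinEdgeMem V1 G1 G2 bp1 bp2 ap1 ap2) ↔ _
  exact ⟨fun h => ⟨(isIVFG_joinMem_left_iff hV1).mp (h.mono subset_union_left le_joinGraph_left),
      (isIVFG_joinMem_right_iff hdisj hV1 hV2).mp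
        (h.mono subset_union_right le_joinGraph_right)⟩,
    fun ⟨h1, h2⟩ => h1.join hdisj hV1 hV2 h2⟩
end
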